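/- arXiv:1403.1140 — 2 statements merged into one kernel-verified Lean document; each statement's English description precedes it below -/
import Mathlib

section
/- Let A(x) be a matrix polynomial of degree d over ℂ such that det A(x) is not identically zero. Then there exist t₁, t₂, t₃, t₄ ∈ ℂ with t₁t₄ − t₂t₃ ≠ 0 such that the matrix polynomial B(y) = (t₃y + t₄)^d · A((t₁y + t₂)/(t₃y + t₄)) has degree d with invertible leading coefficient matrix. -/
open Matrix Polynomial

/-- Rank balancing by a Möbius change of variable: if `A(x) = Σ_{i=0}^d x^i A_i` has
`det A(x)` not identically zero, then there are `t₁,t₂,t₃,t₄ ∈ ℂ` with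
`t₁t₄ − t₂t₃ ≠ 0` such that `B(y) = (t₃y+t₄)^d · A((t₁y+t₂)/(t₃y+t₄))
= Σ_i (t₁y+t₂)^i (t₃y+t₄)^{d−i} A_i` has degree `d` in `y` with invertible leading
coefficient matrix `Σ_i t₁^i t₃^{d−i} A_i`. -/
theorem moebius_rank_balancing {d r : ℕ} (A : Fin (d + 1) → Matrix (Fin r) (Fin r) ℂ)
    (hA : (∑ i : Fin (d + 1), (Polynomial.X ^ (i : ℕ) : Polynomial ℂ) • (A i).map Polynomial.C).det ≠ 0) :
    ∃ t₁ t₂ t₃ t₄ : ℂ, t₁ * t₄ - t₂ * t₃ ≠ 0 ∧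
      (∀ k l : Fin r,
        ((∑ i : Fin (d + 1),
          ((Polynomial.X * Polynomial.C t₁ + Polynomial.C t₂) ^ (i : ℕ) *
           (Polynomial.X * Polynomial.C t₃ + Polynomial.C t₄) ^ (d - (i : ℕ))) •
             (A i).map Polynomial.C) k l).natDegree ≤ d) ∧
      IsUnit (∑ i : Fin (d + 1), (t₁ ^ (i : ℕ) * t₃ ^ (d - (i : ℕ))) • A i).det := by
  set M := ∑ i : Fin (d + 1), (Polynomial.X ^ (i : ℕ) : Polynomial ℂ) • (A i).map Polynomial.C
  obtain ⟨t, ht⟩ : ∃ t : ℂ, M.det.eval t ≠ 0 := by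
    by_contra h
    push_neg at h
    exact hA (Polynomial.zero_of_eval_zero _ h)
  refine ⟨t, -1, 1, 0, by norm_num, ?_, ?_⟩
  · intro k l
    rw [Matrix.sum_apply]
    refine (Polynomial.natDegree_sum_le _ _).trans ?_
    rw [Finset.fold_max_le]
    refine ⟨Nat.zero_le _, fun i _ => ?_⟩
    simp only [Function.comp_apply, Matrix.smul_apply, smul_eq_mul]
    have h1 : (Polynomial.X * Polynomial.C t + Polynomial.C (-1 : ℂ)).natDegree ≤ 1 :=
      (Polynomial.natDegree_add_le _ _).trans
        (max_le (Polynomial.natDegree_mul_le.trans (by simp)) (by simp))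
    have h2 : (Polynomial.X * Polynomial.C (1:ℂ) + Polynomial.C (0 : ℂ)).natDegree ≤ 1 :=
      (Polynomial.natDegree_add_le _ _).trans
        (max_le (Polynomial.natDegree_mul_le.trans (by simp)) (by simp))
    have hp : ((Polynomial.X * Polynomial.C t + Polynomial.C (-1 : ℂ)) ^ (i:ℕ)).natDegree ≤ (i:ℕ) := by
      simpa using Polynomial.natDegree_pow_le_of_le (i:ℕ) h1
    have hq : ((Polynomial.X * Polynomial.C (1:ℂ) + Polynomial.C (0 : ℂ)) ^ (d - (i:ℕ))).natDegree ≤ d - (i:ℕ) := by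
      have := Polynomial.natDegree_pow_le_of_le (d - (i:ℕ)) h2
      omega
    have hC : ((A i).map Polynomial.C k l).natDegree = 0 := by
      simp [Matrix.map_apply]
    have hi : (i : ℕ) ≤ d := Nat.lt_succ_iff.mp i.isLt
    calc (_ * _ * ((A i).map Polynomial.C k l)).natDegree
        ≤ _ + ((A i).map Polynomial.C k l).natDegree := Polynomial.natDegree_mul_le
      _ ≤ ((i:ℕ) + (d - (i:ℕ))) + 0 := by
          exact add_le_add (Polynomial.natDegree_mul_le.trans (add_le_add hp hq)) hC.le
      _ ≤ d := by omega
  · have key : (∑ i : Fin (d + 1), (t ^ (i : ℕ) * (1:ℂ) ^ (d - (i : ℕ))) • A i) =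
        M.map (Polynomial.eval t) := by
      ext k l
      simp only [M, Matrix.map_apply, Matrix.sum_apply, Matrix.smul_apply, one_pow,
        smul_eq_mul, Polynomial.eval_finset_sum, Polynomial.eval_mul, Polynomial.eval_pow,
        Polynomial.eval_X, Polynomial.eval_C, mul_one]
    rw [key]
    have := RingHom.map_det (Polynomial.evalRingHom t) M
    simp only [RingHom.mapMatrix_apply] at this
    have hdet : (M.map (Polynomial.eval t)).det = M.det.eval t := by
      simpa using this.symm
    rw [hdet]
    exact isUnit_iff_ne_zero.mpr ht
end

section
/- A symmetric real n×n matrix D with zero diagonal is a squared-distance matrix of points in ℝ^k if and only if the (n−1)×(n−1) matrix G with G_{ij} = (D_{1i} + D_{1j} − D_{ij})/2 (indices 2..n) is positive semidefinite of rank at most k. -/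
open Matrix
open scoped RealInnerProductSpace

/-- Schoenberg's embeddability criterion from distance geometry: a symmetric real
matrix `D` with zero diagonal is the matrix of squared distances of points in `ℝ^k`
iff the Gram-type matrix `G` with `G_{ij} = (D_{1i} + D_{1j} − D_{ij})/2` is positive
semidefinite of rank at most `k`. -/
theorem schoenberg_embeddability {n k : ℕ} (D : Matrix (Fin (n + 1)) (Fin (n + 1)) ℝ)
    (hsym : D.IsSymm) (hdiag : ∀ i, D i i = 0)
    (G : Matrix (Fin n) (Fin n) ℝ)
    (hG : ∀ i j : Fin n, G i j = (D 0 i.succ + D 0 j.succ - D i.succ j.succ) / 2) :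
    (∃ p : Fin (n + 1) → EuclideanSpace ℝ (Fin k),
        ∀ i j, D i j = ‖p i - p j‖ ^ 2) ↔
      (G.PosSemidef ∧ G.rank ≤ k) := by
  constructor
  · rintro ⟨p, hp⟩
    set q : Fin n → EuclideanSpace ℝ (Fin k) := fun i => p i.succ - p 0 with hq
    have hGram : ∀ i j, G i j = ⟪q i, q j⟫ := by
      intro i j
      have h1 : D 0 i.succ = ‖q i‖ ^ 2 := by rw [hp, hq]; simp [norm_sub_rev]
      have h2 : D 0 j.succ = ‖q j‖ ^ 2 := by rw [hp, hq]; simp [norm_sub_rev]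
      have h3 : D i.succ j.succ = ‖q i - q j‖ ^ 2 := by
        rw [hp, hq]; congr 1; simp [sub_sub_sub_cancel_right]
      have h4 := norm_sub_sq_real (q i) (q j)
      rw [hG, h1, h2, h3, h4]; ring
    set B : Matrix (Fin k) (Fin n) ℝ := fun c i => q i c with hB
    have hGeq : G = Bᴴ * B := by
      ext i j
      rw [hGram, mul_apply]
      simp [hB, PiLp.inner_apply, RCLike.inner_apply, mul_comm, conjTranspose_apply]
      exact Finset.sum_congr rfl fun x _ => (mul_comm _ _).trans rfl
    constructor
    · rw [hGeq]; exact posSemidef_conjTranspose_mul_self B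
    · rw [hGeq, rank_conjTranspose_mul_self]
      simpa using B.rank_le_card_height
  · rintro ⟨hpsd, hrank⟩
    have hherm := hpsd.1
    classical
    set μ := hherm.eigenvalues with hμ
    set U : Matrix (Fin n) (Fin n) ℝ := (hherm.eigenvectorUnitary : Matrix (Fin n) (Fin n) ℝ)
      with hU
    have hcard : Fintype.card {t // μ t ≠ 0} ≤ k := by
      rw [← hherm.rank_eq_card_non_zero_eigs]
      simpa using hrank
    obtain ⟨f⟩ : Nonempty ({t // μ t ≠ 0} ↪ Fin k) :=
      Function.Embedding.nonempty_of_card_le (by simpa using hcard)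
    set w : Fin n → {t // μ t ≠ 0} → ℝ := fun i s => Real.sqrt (μ s) * U i s with hw
    set v : Fin n → EuclideanSpace ℝ (Fin k) :=
      fun i => WithLp.toLp 2 (fun c => ∑ s : {t // μ t ≠ 0}, if f s = c then w i s else 0) with hv
    have hspec : ∀ i j, G i j = ∑ t, μ t * (U i t * U j t) := by
      intro i j
      conv_lhs => rw [hherm.spectral_theorem]
      simp only [Unitary.conjStarAlgAut_apply, Unitary.coe_star, ← hU, ← hμ, mul_apply, star_apply, star_trivial, diagonal_apply,
        Function.comp_apply, RCLike.ofReal_real_eq_id, id_eq, mul_ite, mul_zero, ite_mul,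
        zero_mul, Finset.sum_ite_eq, Finset.sum_ite_eq', Finset.mem_univ, if_true]
      exact Finset.sum_congr rfl fun t _ => by ring
    have hvinner : ∀ i j, ⟪v i, v j⟫ = ∑ s : {t // μ t ≠ 0}, w i s * w j s := by
      intro i j
      simp only [PiLp.inner_apply, RCLike.inner_apply, starRingEnd_apply, star_trivial, hv, PiLp.toLp_apply]
      rw [Finset.sum_congr rfl (fun c _ => Finset.sum_mul_sum Finset.univ Finset.univ _ _),
        Finset.sum_comm]
      refine Finset.sum_congr rfl fun s _ => ?_
      rw [Finset.sum_comm]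
      simp [ite_mul, zero_mul, mul_ite, mul_zero, Finset.sum_ite_eq, Finset.sum_ite_eq',
        f.injective.eq_iff, mul_comm]
    have hinner : ∀ i j, ⟪v i, v j⟫ = G i j := by
      intro i j
      rw [hvinner, hspec]
      have h1 : ∀ s : {t // μ t ≠ 0}, w i s * w j s = μ s * (U i s * U j s) := by
        intro s
        simp only [hw]
        have h2 : (Real.sqrt (μ s) * U i s) * (Real.sqrt (μ s) * U j s)
            = (Real.sqrt (μ s) * Real.sqrt (μ s)) * (U i s * U j s) := by ring
        rw [h2, Real.mul_self_sqrt (hpsd.eigenvalues_nonneg s.1)]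
      rw [Finset.sum_congr rfl fun s _ => h1 s, ← Finset.subtype_univ,
        Finset.sum_subtype_eq_sum_filter (fun t => μ t * (U i t * U j t))
          (p := fun t => μ t ≠ 0)]
      exact Finset.sum_filter_of_ne (fun t _ h h0 => h (by simp [h0]))
    refine ⟨Fin.cases 0 v, ?_⟩
    have key : ∀ i j : Fin n, D i.succ j.succ = ‖v i - v j‖ ^ 2 := by
      intro i j
      have h4 := norm_sub_sq_real (v i) (v j)
      have hii := hinner i i
      have hjj := hinner j j
      have hij := hinner i j
      rw [real_inner_self_eq_norm_sq] at hii hjj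
      have gii : G i i = D 0 i.succ := by rw [hG, hdiag]; ring
      have gjj : G j j = D 0 j.succ := by rw [hG, hdiag]; ring
      have gij := hG i j
      rw [h4]; linarith
    have key0 : ∀ j : Fin n, D 0 j.succ = ‖(0 : EuclideanSpace ℝ (Fin k)) - v j‖ ^ 2 := by
      intro j
      have hjj := hinner j j
      rw [real_inner_self_eq_norm_sq] at hjj
      have gjj : G j j = D 0 j.succ := by rw [hG, hdiag]; ring
      rw [zero_sub, norm_neg]; linarith
    intro i j
    refine Fin.cases ?_ (fun i' => ?_) i
    · refine Fin.cases ?_ (fun j' => ?_) j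
      · simp [hdiag]
      · simpa using key0 j'
    · refine Fin.cases ?_ (fun j' => ?_) j
      · rw [← hsym.apply]
        have := key0 i'
        simpa [norm_sub_rev] using this
      · simpa using key i' j'
end
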